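/- Let M = (E, ℐ) be a matroid with rank function r, and let E be partitioned into sets P₁,...,P_k. Suppose weights w ∈ ℝ^E are constant on each P_i with distinct values c₁ < ... < c_k. Then all bases of M have the same weight Σ_{e∈B} w(e) if and only if every base B satisfies |B ∩ P_i| = r(P_i) for all i. -/

import Mathlib

/-!
If some base `B` meets a part `Pᵢ` in fewer than `r(Pᵢ)` elements, augmenting `B ∩ Pᵢ` from a
maximal independent subset of `Pᵢ` gives an element `e ∈ Pᵢ \ B` that can be exchanged into `B`
for an element `f ∉ Pᵢ`; since `w f ≠ w e`, the two bases have different weights. Conversely, if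
every base meets every part in exactly `r(Pᵢ)` elements, the weight of a base is
`∑ᵢ r(Pᵢ) cᵢ`, independent of the base.
-/

open Finset Matrix

/-- A matroid on a finite ground set, given by its independent sets. -/
structure FinMatroid (α : Type*) [Fintype α] [DecidableEq α] where
  Indep : Finset α → Prop
  indep_empty : Indep ∅
  indep_subset : ∀ ⦃A B : Finset α⦄, Indep B → A ⊆ B → Indep A
  indep_exchange : ∀ ⦃A B : Finset α⦄, Indep A → Indep B → A.card < B.card →
    ∃ e ∈ B, e ∉ A ∧ Indep (insert e A)

attribute [instance] Classical.propDecidable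

/-- The rank of a set: maximum cardinality of an independent subset. -/
noncomputable def FinMatroid.rank {α : Type*} [Fintype α] [DecidableEq α]
    (M : FinMatroid α) (S : Finset α) : ℕ :=
  (S.powerset.filter (fun A => M.Indep A)).sup Finset.card

/-- A base: a maximal independent set. -/
def FinMatroid.IsBase {α : Type*} [Fintype α] [DecidableEq α]
    (M : FinMatroid α) (B : Finset α) : Prop :=
  M.Indep B ∧ ∀ A : Finset α, M.Indep A → B ⊆ A → A = B

/-- A circuit: a minimal dependent set. -/
def FinMatroid.IsCircuit {α : Type*} [Fintype α] [DecidableEq α]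
    (M : FinMatroid α) (C : Finset α) : Prop :=
  ¬ M.Indep C ∧ ∀ e ∈ C, M.Indep (C.erase e)

/-- Membership in the matroid base polytope `B(M)`. -/
noncomputable def FinMatroid.memBasePolytope {α : Type*} [Fintype α] [DecidableEq α]
    (M : FinMatroid α) (x : α → ℝ) : Prop :=
  (∀ e, 0 ≤ x e) ∧ (∀ S : Finset α, ∑ e ∈ S, x e ≤ (M.rank S : ℝ)) ∧
    (∑ e, x e = (M.rank univ : ℝ))

namespace FinMatroid

variable {α : Type*} [Fintype α] [DecidableEq α] {M : FinMatroid α}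

theorem card_le_rank {I S : Finset α} (hI : M.Indep I) (hIS : I ⊆ S) : I.card ≤ M.rank S :=
  le_sup (f := card) (mem_filter.2 ⟨mem_powerset.2 hIS, hI⟩)

theorem exists_indep_subset_card_eq_rank (M : FinMatroid α) (S : Finset α) :
    ∃ I ⊆ S, M.Indep I ∧ I.card = M.rank S := by
  obtain ⟨I, hI, hcard⟩ := exists_mem_eq_sup (S.powerset.filter M.Indep)
    ⟨∅, mem_filter.2 ⟨empty_mem_powerset S, M.indep_empty⟩⟩ card
  rw [mem_filter, mem_powerset] at hI
  exact ⟨I, hI.1, hI.2, hcard.symm⟩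

theorem IsBase.card_le_of_indep {B I : Finset α} (hB : M.IsBase B) (hI : M.Indep I) :
    I.card ≤ B.card := by
  by_contra! hlt
  obtain ⟨e, -, heB, hins⟩ := M.indep_exchange hB.1 hI hlt
  exact heB (hB.2 _ hins (subset_insert e B) ▸ mem_insert_self e B)

theorem IsBase.card_eq {B B' : Finset α} (hB : M.IsBase B) (hB' : M.IsBase B') :
    B'.card = B.card :=
  le_antisymm (hB.card_le_of_indep hB'.1) (hB'.card_le_of_indep hB.1)

theorem IsBase.isBase_of_card_le {B I : Finset α} (hB : M.IsBase B) (hI : M.Indep I)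
    (hcard : B.card ≤ I.card) : M.IsBase I :=
  ⟨hI, fun _ hA hIA =>
    (eq_of_subset_of_card_le hIA ((hB.card_le_of_indep hA).trans hcard)).symm⟩

theorem IsBase.exists_isBase_of_indep_subset {B J X : Finset α} (hB : M.IsBase B)
    (hJ : M.Indep J) (hJX : J ⊆ X) (hBX : B ⊆ X) :
    ∃ B', M.IsBase B' ∧ J ⊆ B' ∧ B' ⊆ X := by
  by_cases hlt : J.card < B.card
  · obtain ⟨x, hxB, hxJ, hins⟩ := M.indep_exchange hJ hB.1 hlt
    obtain ⟨B', hB', hJB', hB'X⟩ :=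
      hB.exists_isBase_of_indep_subset hins (insert_subset (hBX hxB) hJX) hBX
    exact ⟨B', hB', (subset_insert x J).trans hJB', hB'X⟩
  · exact ⟨J, hB.isBase_of_card_le hJ (not_lt.1 hlt), subset_rfl, hJX⟩
termination_by B.card - J.card
decreasing_by rw [card_insert_of_notMem hxJ]; omega

theorem IsBase.exists_isBase_insert_eq_insert_of_card_inter_lt_rank {B S : Finset α}
    (hB : M.IsBase B) (hS : (B ∩ S).card < M.rank S) :
    ∃ B', M.IsBase B' ∧ ∃ e ∈ S, ∃ f ∉ S, e ∉ B ∧ f ∉ B' ∧ insert e B = insert f B' := by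
  obtain ⟨I, hIS, hI, hIcard⟩ := M.exists_indep_subset_card_eq_rank S
  obtain ⟨e, heI, heBS, hins⟩ :=
    M.indep_exchange (M.indep_subset hB.1 inter_subset_left) hI (hIcard ▸ hS)
  have heS : e ∈ S := hIS heI
  have heB : e ∉ B := fun h => heBS (mem_inter.2 ⟨h, heS⟩)
  obtain ⟨B', hB', hJB', hB'X⟩ := hB.exists_isBase_of_indep_subset hins
    (insert_subset_insert e inter_subset_left) (subset_insert e B)
  obtain ⟨f, hf⟩ : ∃ f, insert e B \ B' = {f} := by
    rw [← card_eq_one, card_sdiff_of_subset hB'X, card_insert_of_notMem heB, hB.card_eq hB']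
    omega
  have hfB' : f ∉ B' := (mem_sdiff.1 (hf ▸ mem_singleton_self f)).2
  have hfS : f ∉ S := by
    intro hfS
    rcases mem_insert.1 (mem_sdiff.1 (hf ▸ mem_singleton_self f)).1 with rfl | hfB
    · exact hfB' (hJB' (mem_insert_self f _))
    · exact hfB' (hJB' (mem_insert_of_mem (mem_inter.2 ⟨hfB, hfS⟩)))
  refine ⟨B', hB', e, heS, f, hfS, heB, hfB', ?_⟩
  rw [← sdiff_union_of_subset hB'X, hf, insert_eq]

end FinMatroid

theorem sum_eq_sum_card_inter_mul {α ι : Type*} [DecidableEq α] [Fintype ι]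
    {P : ι → Finset α} (hpart : ∀ e, ∃! i, e ∈ P i) {w : α → ℝ} {c : ι → ℝ}
    (hw : ∀ i, ∀ e ∈ P i, w e = c i) (B : Finset α) :
    ∑ e ∈ B, w e = ∑ i, (B ∩ P i).card * c i := by
  choose part hpart_mem using fun e => (hpart e).exists
  rw [← sum_fiberwise_of_maps_to (g := part) (fun e _ => mem_univ (part e))]
  refine sum_congr rfl fun i _ => ?_
  have hfiber : B.filter (fun e => part e = i) = B ∩ P i := by
    ext e
    simp only [mem_filter, mem_inter]
    exact and_congr_right fun _ =>
      ⟨fun h => h ▸ hpart_mem e, fun he => (hpart e).unique (hpart_mem e) he⟩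
  rw [hfiber, sum_congr rfl fun e he => hw i e (mem_inter.1 he).2, sum_const, nsmul_eq_mul]

/-- if the weights `w` are constant on each part `Pᵢ` of a partition of the
ground set with distinct values `c₁ < … < c_k`, then all bases have the same weight iff
every base `B` satisfies `|B ∩ Pᵢ| = r(Pᵢ)` for all `i`. -/
theorem bases_equal_weight_iff_full_rank_intersection {α : Type*} [Fintype α] [DecidableEq α]
    (M : FinMatroid α)
    (k : ℕ) (P : Fin k → Finset α)
    (hpart : ∀ e : α, ∃! i : Fin k, e ∈ P i)
    (w : α → ℝ) (c : Fin k → ℝ) (hc : StrictMono c)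
    (hw : ∀ i : Fin k, ∀ e ∈ P i, w e = c i) :
    (∀ B₁ B₂ : Finset α, M.IsBase B₁ → M.IsBase B₂ →
      ∑ e ∈ B₁, w e = ∑ e ∈ B₂, w e) ↔
    (∀ B : Finset α, M.IsBase B → ∀ i : Fin k, (B ∩ P i).card = M.rank (P i)) := by
  constructor
  · intro hequal B hB i
    refine le_antisymm (FinMatroid.card_le_rank (M.indep_subset hB.1 inter_subset_left)
      inter_subset_right) (not_lt.1 fun hlt => ?_)
    obtain ⟨B', hB', e, he, f, hf, heB, hfB', hexchange⟩ :=
      hB.exists_isBase_insert_eq_insert_of_card_inter_lt_rank hlt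
    have hwe : w e = w f := by
      have hsum := congrArg (∑ x ∈ ·, w x) hexchange
      simp only [sum_insert heB, sum_insert hfB', hequal B B' hB hB'] at hsum
      linarith
    obtain ⟨j, hfj⟩ := (hpart f).exists
    have hji : j ≠ i := fun h => hf (h ▸ hfj)
    exact hji (hc.injective (by rw [← hw j f hfj, ← hw i e he, hwe]))
  · intro hfull B₁ B₂ hB₁ hB₂
    simp only [sum_eq_sum_card_inter_mul hpart hw, hfull B₁ hB₁, hfull B₂ hB₂]
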